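/- Let A be a continuous information frame and T(A) the strong continuous information frame with token set Ã = { (a,X) : a ∈ A, X ∈ Con_a }. Define M_A = (M^A_i)_{i∈A} by X M^A_i (b,Y) ⇔ X ⊨_i ({b} ∪ Y), and N_A = (N^A_{(k,K)})_{(k,K)∈Ã} by 𝔛 N^A_{(k,K)} a ⇔ 𝔛 ⊨̃_{(k,K)} (a, {a}). Then: (1) M_A is an approximable family from A to T(A); (2) N_A is an approximable family from T(A) to A; (3) M_A ∘ N_A = Id_A; (4) N_A ∘ M_A = Id_{T(A)}; and (5) for any further continuous information frame A' and approximable family H from A to A', M_A ∘ T(H) = H ∘ M_{A'}. -/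
import Mathlib


open scoped Classical

/-! ### Continuous information frames -/

structure InfFrame (A : Type*) where
  Con : A → Set (Finset A)
  ent : A → Finset A → A → Prop

namespace InfFrame

variable {A B C : Type*}

/-- `X ⊨_i Y` : every element of `Y` is entailed by `X` at `i`. -/
def entS (𝔄 : InfFrame A) (i : A) (X Y : Finset A) : Prop :=
  ∀ b ∈ Y, 𝔄.ent i X b

/-- The axioms of a continuous information frame. -/
structure IsCIF (𝔄 : InfFrame A) : Prop where
  self_con : ∀ i : A, ({i} : Finset A) ∈ 𝔄.Con i
  con_sub : ∀ (i : A) (X Y : Finset A), Y ⊆ X → X ∈ 𝔄.Con i → Y ∈ 𝔄.Con i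
  sound : ∀ (i : A) (X Y : Finset A), X ∈ 𝔄.Con i → 𝔄.entS i X Y → Y ∈ 𝔄.Con i
  weaken : ∀ (i : A) (X Y : Finset A) (a : A),
    X ∈ 𝔄.Con i → Y ∈ 𝔄.Con i → X ⊆ Y → 𝔄.ent i X a → 𝔄.ent i Y a
  cut : ∀ (i : A) (X Y : Finset A) (a : A),
    X ∈ 𝔄.Con i → 𝔄.entS i X Y → 𝔄.ent i Y a → 𝔄.ent i X a
  con_transfer : ∀ i j : A, ({i} : Finset A) ∈ 𝔄.Con j → 𝔄.Con i ⊆ 𝔄.Con j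
  ent_transfer : ∀ (i j : A) (X : Finset A) (a : A),
    ({i} : Finset A) ∈ 𝔄.Con j → X ∈ 𝔄.Con i → 𝔄.ent i X a → 𝔄.ent j X a
  interp : ∀ (i : A) (X Y : Finset A), X ∈ 𝔄.Con i → 𝔄.entS i X Y →
    ∃ e : A, ∃ Z ∈ 𝔄.Con e, 𝔄.entS i X ({e} ∪ Z) ∧ 𝔄.entS e Z Y

/-- Condition (S): a continuous information frame is strong. -/
def Strong (𝔄 : InfFrame A) : Prop :=
  ∀ i : A, ∀ X ∈ 𝔄.Con i, X ≠ {i} → 𝔄.entS i {i} X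

/-- Condition (T): `t` is a truth element. -/
def IsTruth (𝔄 : InfFrame A) (t : A) : Prop :=
  ∀ i : A, 𝔄.ent i ∅ t

/-- Approximable families between continuous information frames. -/
structure IsApproxFam (𝔄 : InfFrame A) (𝔅 : InfFrame B)
    (H : A → Finset A → B → Prop) : Prop where
  af1 : ∀ (i : A) (X : Finset A) (k : B) (Y : Finset B) (b : B),
    X ∈ 𝔄.Con i → Y ∈ 𝔅.Con k → (∀ c ∈ ({k} : Finset B) ∪ Y, H i X c) →
    𝔅.ent k Y b → H i X b
  af2 : ∀ (i : A) (X X' : Finset A) (b : B),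
    X ∈ 𝔄.Con i → X' ∈ 𝔄.Con i → X ⊆ X' → H i X b → H i X' b
  af3 : ∀ (i : A) (X X' : Finset A) (b : B),
    X ∈ 𝔄.Con i → X' ∈ 𝔄.Con i → 𝔄.entS i X X' → H i X' b → H i X b
  af4 : ∀ (i j : A) (X : Finset A) (b : B),
    ({i} : Finset A) ∈ 𝔄.Con j → X ∈ 𝔄.Con i → H i X b → H j X b
  af5 : ∀ (i : A) (X : Finset A) (F : Finset B),
    X ∈ 𝔄.Con i → (∀ c ∈ F, H i X c) →
    ∃ c : A, ∃ U ∈ 𝔄.Con c, ∃ e : B, ∃ V ∈ 𝔅.Con e,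
      𝔄.entS i X ({c} ∪ U) ∧ (∀ d ∈ ({e} : Finset B) ∪ V, H c U d) ∧
      ∀ d ∈ F, 𝔅.ent e V d

/-- `H` respects the truth elements `t` and `t'`. -/
def RespectsTruth (H : A → Finset A → B → Prop) (t : A) (t' : B) : Prop :=
  H t ∅ t'

/-- Composition of approximable families (`𝔅` is the middle frame). -/
def compFam (𝔅 : InfFrame B)
    (G : A → Finset A → B → Prop) (H : B → Finset B → C → Prop) :
    A → Finset A → C → Prop :=
  fun i X a => ∃ e : B, ∃ V ∈ 𝔅.Con e,
    (∀ c ∈ ({e} : Finset B) ∪ V, G i X c) ∧ H e V a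

/-- Equality of families of relations `H_i ⊆ Con_i × B`. -/
def FamEq (𝔄 : InfFrame A) (H K : A → Finset A → B → Prop) : Prop :=
  ∀ i : A, ∀ X ∈ 𝔄.Con i, ∀ b : B, H i X b ↔ K i X b

end InfFrame

/-! ### (Simplified) continuous information systems -/

structure InfSys (S : Type*) where
  Con : Set (Finset S)
  ent : Finset S → S → Prop

namespace InfSys

variable {S T U : Type*}

/-- `X ⊢ Y` : every element of `Y` is entailed by `X`. -/
def entS (𝕊 : InfSys S) (X Y : Finset S) : Prop := ∀ b ∈ Y, 𝕊.ent X b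

/-- The axioms of a simplified continuous information system. -/
structure IsSCIS (𝕊 : InfSys S) : Prop where
  singleton_con : ∀ a : S, ({a} : Finset S) ∈ 𝕊.Con
  weaken : ∀ (X Y : Finset S) (a : S),
    X ∈ 𝕊.Con → Y ∈ 𝕊.Con → X ⊆ Y → 𝕊.ent X a → 𝕊.ent Y a
  cut : ∀ (X Y : Finset S) (a : S),
    X ∈ 𝕊.Con → Y ∈ 𝕊.Con → 𝕊.entS X Y → 𝕊.ent Y a → 𝕊.ent X a
  interp : ∀ X ∈ 𝕊.Con, ∀ a : S, 𝕊.ent X a →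
    ∃ Z ∈ 𝕊.Con, 𝕊.entS X Z ∧ 𝕊.ent Z a
  dir : ∀ X ∈ 𝕊.Con, ∀ F : Finset S, 𝕊.entS X F →
    ∃ Z ∈ 𝕊.Con, F ⊆ Z ∧ 𝕊.entS X Z

/-- The axioms of a continuous information system. -/
structure IsCIS (𝕊 : InfSys S) extends IsSCIS 𝕊 : Prop where
  insert_con : ∀ X ∈ 𝕊.Con, ∀ a : S, 𝕊.ent X a → X ∪ {a} ∈ 𝕊.Con

/-- Approximable mappings between (simplified) continuous information systems. -/
structure IsApproxMap (𝕊 : InfSys S) (𝕋 : InfSys T)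
    (H : Finset S → T → Prop) : Prop where
  am1 : ∀ X ∈ 𝕊.Con, ∀ Y ∈ 𝕋.Con, ∀ b : T,
    (∀ c ∈ Y, H X c) → 𝕋.ent Y b → H X b
  am2 : ∀ X ∈ 𝕊.Con, ∀ X' ∈ 𝕊.Con, ∀ b : T, X' ⊆ X → H X' b → H X b
  am3 : ∀ X ∈ 𝕊.Con, ∀ X' ∈ 𝕊.Con, ∀ b : T, 𝕊.entS X X' → H X' b → H X b
  am4 : ∀ X ∈ 𝕊.Con, ∀ b : T, H X b →
    ∃ Z ∈ 𝕊.Con, ∃ Z' ∈ 𝕋.Con, 𝕊.entS X Z ∧ (∀ c ∈ Z', H Z c) ∧ 𝕋.ent Z' b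
  am5 : ∀ X ∈ 𝕊.Con, ∀ F : Finset T, (∀ c ∈ F, H X c) →
    ∃ Z ∈ 𝕋.Con, F ⊆ Z ∧ ∀ c ∈ Z, H X c

/-- Relational composition of approximable mappings (`𝕋` is the middle system). -/
def compMap (𝕋 : InfSys T) (H : Finset S → T → Prop) (G : Finset T → U → Prop) :
    Finset S → U → Prop :=
  fun X u => ∃ Y ∈ 𝕋.Con, (∀ b ∈ Y, H X b) ∧ G Y u

/-- Equality of relations `H ⊆ Con × U`. -/
def MapEq (𝕊 : InfSys S) (H K : Finset S → U → Prop) : Prop :=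
  ∀ X ∈ 𝕊.Con, ∀ u : U, H X u ↔ K X u

end InfSys

/-! ### The constructions F, S, T and W -/

/-- The tokens of the frame `F(𝕊)`: the consistent sets of `𝕊`. -/
abbrev ConTok {S : Type*} (𝕊 : InfSys S) : Type _ := {X : Finset S // X ∈ 𝕊.Con}

/-- The frame `F(𝕊)` associated with a simplified continuous information system. -/
def Fframe {S : Type*} (𝕊 : InfSys S) : InfFrame (ConTok 𝕊) where
  Con X := {𝔛 | 𝔛 = {X} ∨ ∀ Y ∈ 𝔛, 𝕊.entS X.1 Y.1}
  ent X 𝔛 Y := ∃ E ∈ 𝔛 ∪ ({X} : Finset (ConTok 𝕊)), 𝕊.entS E.1 Y.1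

/-- The action of `F` on approximable mappings. -/
def Fmap {S T : Type*} (𝕊 : InfSys S) (𝕋 : InfSys T) (H : Finset S → T → Prop) :
    ConTok 𝕊 → Finset (ConTok 𝕊) → ConTok 𝕋 → Prop :=
  fun X 𝔛 Y => ∃ E ∈ 𝔛 ∪ ({X} : Finset (ConTok 𝕊)), ∀ b ∈ Y.1, H E.1 b

/-- The information system `S(𝔄)` associated with a (strong) continuous information frame. -/
def Ssys {A : Type*} (𝔄 : InfFrame A) : InfSys A where
  Con := {X | ∃ a : A, ∃ Xb ∈ 𝔄.Con a, X = Xb ∪ {a}}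
  ent X c := ∃ a : A, ∃ Xb ∈ 𝔄.Con a, X = Xb ∪ {a} ∧
    (𝔄.ent a Xb c ∨ 𝔄.ent a {a} c)

/-- The action of `S` on approximable families. -/
def Smap {A B : Type*} (𝔄 : InfFrame A) (H : A → Finset A → B → Prop) :
    Finset A → B → Prop :=
  fun X b => ∃ a : A, ∃ Xb ∈ 𝔄.Con a, X = Xb ∪ {a} ∧ (H a Xb b ∨ H a {a} b)

/-- The tokens of the frame `T(𝔄)`: pairs `(a, X)` with `X ∈ Con_a`. -/
abbrev TTok {A : Type*} (𝔄 : InfFrame A) : Type _ := {p : A × Finset A // p.2 ∈ 𝔄.Con p.1}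

/-- The strong frame `T(𝔄)` associated with a continuous information frame. -/
def Tframe {A : Type*} (𝔄 : InfFrame A) : InfFrame (TTok 𝔄) where
  Con aX := {𝔜 | 𝔜 = {aX} ∨ ∀ bY ∈ 𝔜, 𝔄.entS aX.1.1 aX.1.2 ({bY.1.1} ∪ bY.1.2)}
  ent aX 𝔛 eV := ∃ cZ ∈ 𝔛 ∪ ({aX} : Finset (TTok 𝔄)),
    𝔄.entS cZ.1.1 cZ.1.2 ({eV.1.1} ∪ eV.1.2)

/-- The action of `T` on approximable families. -/
def Tmap {A B : Type*} (𝔄 : InfFrame A) (𝔅 : InfFrame B)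
    (H : A → Finset A → B → Prop) :
    TTok 𝔄 → Finset (TTok 𝔄) → TTok 𝔅 → Prop :=
  fun aX 𝔛 bY => ∃ cZ ∈ 𝔛 ∪ ({aX} : Finset (TTok 𝔄)),
    ∀ d ∈ ({bY.1.1} : Finset B) ∪ bY.1.2, H cZ.1.1 cZ.1.2 d

/-- Removing the adjoined truth token: `X \ {t}` as a finite subset of `A`. -/
noncomputable def unsome {A : Type*} (X : Finset (Option A)) : Finset A :=
  X.preimage some (Option.some_injective A).injOn

/-- The frame `W(𝔄)`: `𝔄` extended by a (fresh) truth element `none`. -/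
def Wframe {A : Type*} (𝔄 : InfFrame A) : InfFrame (Option A) where
  Con a :=
    match a with
    | some a => {X | ∃ Y ∈ 𝔄.Con a, X = Y.image some ∨ X = Y.image some ∪ {none}}
    | none => {X | X = {none} ∨ X = ∅}
  ent a X c :=
    match a, c with
    | _, none => True
    | none, some _ => False
    | some a', some c' => 𝔄.ent a' (unsome X) c'

/-- The approximable family `M_𝔄 : 𝔄 ⟶ T(𝔄)`: `X M^𝔄_i (b,Y) ⇔ X ⊨_i ({b} ∪ Y)`. -/
def Mfam {A : Type*} (𝔄 : InfFrame A) : A → Finset A → TTok 𝔄 → Prop :=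
  fun i X bY => 𝔄.entS i X ({bY.1.1} ∪ bY.1.2)

/-- The approximable family `N_𝔄 : T(𝔄) ⟶ 𝔄`: `𝔛 N^𝔄_(k,K) a ⇔ 𝔛 ⊨̃_(k,K) (a,{a})`. -/
def Nfam {A : Type*} (𝔄 : InfFrame A) : TTok 𝔄 → Finset (TTok 𝔄) → A → Prop :=
  fun kK 𝔛 a => ∃ cZ ∈ 𝔛 ∪ ({kK} : Finset (TTok 𝔄)),
    𝔄.entS cZ.1.1 cZ.1.2 (({a} : Finset A) ∪ {a})


section DecHelpers

variable {α : Type*} {D : DecidableEq α} {a : α} {s t : Finset α}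

theorem memUl (t : Finset α) (h : a ∈ s) :
    a ∈ @Union.union _ (@Finset.instUnion α D) s t := by
  letI := D; exact Finset.mem_union_left t h

theorem memUr (s : Finset α) (h : a ∈ t) :
    a ∈ @Union.union _ (@Finset.instUnion α D) s t := by
  letI := D; exact Finset.mem_union_right s h

theorem memU (h : a ∈ @Union.union _ (@Finset.instUnion α D) s t) :
    a ∈ s ∨ a ∈ t := by
  letI := D; exact Finset.mem_union.mp h

end DecHelpers

section IsoTHelpers

variable {A : Type*} {B : Type*} {𝔄 : InfFrame A} {𝔅 : InfFrame B}

lemma entS_mono {i : A} {X Y Z : Finset A} (hYZ : Y ⊆ Z)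
    (hZ : 𝔄.entS i X Z) : 𝔄.entS i X Y := fun b hb => hZ b (hYZ hb)

lemma singleton_con_of_ent (h : 𝔄.IsCIF) {i c : A} {X : Finset A}
    (hX : X ∈ 𝔄.Con i) (hc : 𝔄.ent i X c) : ({c} : Finset A) ∈ 𝔄.Con i :=
  h.sound i X {c} hX (fun b hb => by
    rw [Finset.mem_singleton] at hb; subst hb; exact hc)

lemma trans13 (h : 𝔄.IsCIF) {i c : A} {X Z : Finset A} {w : A}
    (hX : X ∈ 𝔄.Con i) (hZ : Z ∈ 𝔄.Con c)
    (h1 : 𝔄.entS i X ({c} ∪ Z)) (h2 : 𝔄.ent c Z w) : 𝔄.ent i X w := by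
  have hc : 𝔄.ent i X c := h1 c (memUl _ (Finset.mem_singleton_self c))
  have hcc := singleton_con_of_ent h hX hc
  have hiw : 𝔄.ent i Z w := h.ent_transfer c i Z w hcc hZ h2
  exact h.cut i X Z w hX (fun z hz => h1 z (memUr _ hz)) hiw

lemma trans13S (h : 𝔄.IsCIF) {i c : A} {X Z W : Finset A}
    (hX : X ∈ 𝔄.Con i) (hZ : Z ∈ 𝔄.Con c)
    (h1 : 𝔄.entS i X ({c} ∪ Z)) (h2 : 𝔄.entS c Z W) : 𝔄.entS i X W :=
  fun w hw => trans13 h hX hZ h1 (h2 w hw)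

lemma Htrans {H : A → Finset A → B → Prop} (h : 𝔄.IsCIF)
    (hH : InfFrame.IsApproxFam 𝔄 𝔅 H) {i c : A} {X Z : Finset A} {d : B}
    (hX : X ∈ 𝔄.Con i) (hZ : Z ∈ 𝔄.Con c)
    (h1 : 𝔄.entS i X ({c} ∪ Z)) (h2 : H c Z d) : H i X d := by
  have hc : 𝔄.ent i X c := h1 c (memUl _ (Finset.mem_singleton_self c))
  have hcc := singleton_con_of_ent h hX hc
  have hZi : Z ∈ 𝔄.Con i := h.con_transfer c i hcc hZ
  exact hH.af3 i X Z d hX hZi (fun z hz => h1 z (memUr _ hz))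
    (hH.af4 c i Z d hcc hZ h2)

lemma mem_TCon {kK : TTok 𝔄} {𝔛 : Finset (TTok 𝔄)} :
    𝔛 ∈ (Tframe 𝔄).Con kK ↔
      (𝔛 = {kK} ∨ ∀ bY ∈ 𝔛, 𝔄.entS kK.1.1 kK.1.2 ({bY.1.1} ∪ bY.1.2)) := Iff.rfl

lemma entS_pair {c a : A} {Z : Finset A} :
    𝔄.entS c Z (({a} : Finset A) ∪ {a}) ↔ 𝔄.ent c Z a := by
  constructor
  · intro h'; exact h' a (memUl _ (Finset.mem_singleton_self a))
  · intro h' b hb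
    have : b = a := by simpa using hb
    subst this; exact h'

lemma wit_entS (h : 𝔄.IsCIF) {kK cZ : TTok 𝔄} {𝔛 : Finset (TTok 𝔄)} {W : Finset A}
    (hCon : 𝔛 ∈ (Tframe 𝔄).Con kK) (hmem : cZ ∈ 𝔛 ∪ ({kK} : Finset (TTok 𝔄)))
    (hent : 𝔄.entS cZ.1.1 cZ.1.2 W) : 𝔄.entS kK.1.1 kK.1.2 W := by
  rcases memU hmem with hm | hm
  · rcases mem_TCon.mp hCon with hC | hC
    · rw [hC, Finset.mem_singleton] at hm; subst hm; exact hent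
    · exact trans13S h kK.2 cZ.2 (hC cZ hm) hent
  · rw [Finset.mem_singleton] at hm; subst hm; exact hent

lemma ent_of_Nfam (h : 𝔄.IsCIF) {kK : TTok 𝔄} {𝔛 : Finset (TTok 𝔄)} {a : A}
    (hCon : 𝔛 ∈ (Tframe 𝔄).Con kK) (hN : Nfam 𝔄 kK 𝔛 a) :
    𝔄.ent kK.1.1 kK.1.2 a := by
  obtain ⟨cZ, hmem, hent⟩ := hN
  exact entS_pair.mp (wit_entS h hCon hmem hent)

lemma Nfam_of_ent {kK : TTok 𝔄} {𝔛 : Finset (TTok 𝔄)} {a : A}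
    (ha : 𝔄.ent kK.1.1 kK.1.2 a) : Nfam 𝔄 kK 𝔛 a :=
  ⟨kK, memUr _ (Finset.mem_singleton_self kK), entS_pair.mpr ha⟩

end IsoTHelpers

/-- Lemma 17 (`lem-isoT`): `M_𝔄` and `N_𝔄` are mutually inverse approximable
families between `𝔄` and `T(𝔄)`, and `M` is natural. -/
theorem Mfam_Nfam_props.{u, v} {A : Type u} (𝔄 : InfFrame A) (h : 𝔄.IsCIF) :
    InfFrame.IsApproxFam 𝔄 (Tframe 𝔄) (Mfam 𝔄) ∧
    InfFrame.IsApproxFam (Tframe 𝔄) 𝔄 (Nfam 𝔄) ∧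
    InfFrame.FamEq 𝔄 (InfFrame.compFam (Tframe 𝔄) (Mfam 𝔄) (Nfam 𝔄)) 𝔄.ent ∧
    InfFrame.FamEq (Tframe 𝔄)
      (InfFrame.compFam 𝔄 (Nfam 𝔄) (Mfam 𝔄)) (Tframe 𝔄).ent ∧
    ∀ (B : Type v) (𝔅 : InfFrame B), 𝔅.IsCIF →
      ∀ H : A → Finset A → B → Prop, InfFrame.IsApproxFam 𝔄 𝔅 H →
        InfFrame.FamEq 𝔄
          (InfFrame.compFam (Tframe 𝔄) (Mfam 𝔄) (Tmap 𝔄 𝔅 H))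
          (InfFrame.compFam 𝔅 H (Mfam 𝔅)) := by
  refine ⟨?_, ?_, ?_, ?_, ?_⟩
  -- (1) M is an approximable family
  · refine ⟨?_, ?_, ?_, ?_, ?_⟩
    · -- af1
      intro i X kK 𝔜 bY hX h𝔜 hall hent
      obtain ⟨cZ, hmem, hcz⟩ := hent
      have hMcZ : 𝔄.entS i X ({cZ.1.1} ∪ cZ.1.2) := by
        apply hall cZ
        rcases memU hmem with hm | hm
        · exact memUr _ hm
        · exact memUl _ hm
      exact trans13S h hX cZ.2 hMcZ hcz
    · -- af2
      intro i X X' bY hX hX' hsub hM b hb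
      exact h.weaken i X X' b hX hX' hsub (hM b hb)
    · -- af3
      intro i X X' bY hX hX' hXX' hM b hb
      exact h.cut i X X' b hX hXX' (hM b hb)
    · -- af4
      intro i j X bY hij hX hM b hb
      exact h.ent_transfer i j X b hij hX (hM b hb)
    · -- af5
      intro i X F hX hF
      obtain ⟨W, hXW, hsubW⟩ :
          ∃ W : Finset A, 𝔄.entS i X W ∧
            ∀ bY ∈ F, ({bY.1.1} ∪ bY.1.2 : Finset A) ⊆ W := by
        refine ⟨F.biUnion (fun bY => {bY.1.1} ∪ bY.1.2), ?_, ?_⟩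
        · intro w hw
          obtain ⟨bY, hbY, hw'⟩ := Finset.mem_biUnion.mp hw
          exact hF bY hbY w hw'
        · intro bY hbY
          exact Finset.subset_biUnion_of_mem (fun bY => {bY.1.1} ∪ bY.1.2) hbY
      obtain ⟨c, Z, hZ, h1, h2⟩ := h.interp i X W hX hXW
      obtain ⟨c', Z', hZ', h3, h4⟩ := h.interp c Z W hZ h2
      refine ⟨c, Z, hZ, ⟨(c', Z'), hZ'⟩, F,
        mem_TCon.mpr (Or.inr (fun bY hbY => entS_mono (hsubW bY hbY) h4)),
        h1, ?_, ?_⟩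
      · intro d hd
        rcases memU hd with hm | hm
        · rw [Finset.mem_singleton] at hm; subst hm; exact h3
        · exact entS_mono (hsubW d hm) h2
      · intro d hd
        exact ⟨⟨(c', Z'), hZ'⟩, memUr _ (Finset.mem_singleton_self _),
          entS_mono (hsubW d hd) h4⟩
  -- (2) N is an approximable family
  · refine ⟨?_, ?_, ?_, ?_, ?_⟩
    · -- af1
      intro kK 𝔛 k' Y b h𝔛 hY hall hb
      apply Nfam_of_ent
      have hKeY : 𝔄.entS kK.1.1 kK.1.2 ({k'} ∪ Y) :=
        fun c hc => ent_of_Nfam h h𝔛 (hall c hc)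
      exact trans13 h kK.2 hY hKeY hb
    · -- af2
      intro kK 𝔛 𝔛' b h1 h2 hsub hN
      exact Nfam_of_ent (ent_of_Nfam h h1 hN)
    · -- af3
      intro kK 𝔛 𝔛' b h1 h2 hS hN
      exact Nfam_of_ent (ent_of_Nfam h h2 hN)
    · -- af4
      intro kK jJ 𝔛 b hkj h𝔛 hN
      obtain ⟨cZ, hmem, hent⟩ := hN
      rw [entS_pair] at hent
      rcases memU hmem with hm | hm
      · exact ⟨cZ, memUl _ hm, entS_pair.mpr hent⟩
      · rw [Finset.mem_singleton] at hm; subst hm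
        rcases mem_TCon.mp hkj with hC | hC
        · have hEq : cZ = jJ := Finset.singleton_inj.mp hC
          exact ⟨cZ, memUr _ (Finset.mem_singleton.mpr hEq),
            entS_pair.mpr hent⟩
        · have hKK : 𝔄.entS jJ.1.1 jJ.1.2 ({cZ.1.1} ∪ cZ.1.2) :=
            hC cZ (Finset.mem_singleton_self cZ)
          exact ⟨jJ, memUr _ (Finset.mem_singleton_self _),
            entS_pair.mpr (trans13 h jJ.2 cZ.2 hKK hent)⟩
    · -- af5
      intro kK 𝔛 F h𝔛 hF
      have hKF : 𝔄.entS kK.1.1 kK.1.2 F := fun a ha => ent_of_Nfam h h𝔛 (hF a ha)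
      obtain ⟨e, Z, hZ, h1, h2⟩ := h.interp kK.1.1 kK.1.2 F kK.2 hKF
      obtain ⟨e', V, hV, h3, h4⟩ := h.interp e Z F hZ h2
      refine ⟨⟨(e, Z), hZ⟩, {⟨(e, Z), hZ⟩}, mem_TCon.mpr (Or.inl rfl), e', V, hV,
        ?_, ?_, h4⟩
      · intro d hd
        have hd' : d = ⟨(e, Z), hZ⟩ := by simpa using hd
        subst hd'
        exact ⟨kK, memUr _ (Finset.mem_singleton_self _), h1⟩
      · intro d hd
        exact ⟨⟨(e, Z), hZ⟩, memUr _ (Finset.mem_singleton_self _),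
          entS_pair.mpr (h3 d hd)⟩
  -- (3) M ∘ N = Id
  · intro i X hX a
    constructor
    · rintro ⟨cZ, 𝔙, h𝔙, hM, hN⟩
      have hMe : 𝔄.entS i X ({cZ.1.1} ∪ cZ.1.2) :=
        hM cZ (memUl _ (Finset.mem_singleton_self _))
      exact trans13 h hX cZ.2 hMe (ent_of_Nfam h h𝔙 hN)
    · intro ha
      have hXa : 𝔄.entS i X {a} := by
        intro b hb; rw [Finset.mem_singleton] at hb; subst hb; exact ha
      obtain ⟨c, Z, hZ, h1, h2⟩ := h.interp i X {a} hX hXa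
      refine ⟨⟨(c, Z), hZ⟩, {⟨(c, Z), hZ⟩}, mem_TCon.mpr (Or.inl rfl), ?_,
        Nfam_of_ent (h2 a (Finset.mem_singleton_self a))⟩
      intro d hd
      have hd' : d = ⟨(c, Z), hZ⟩ := by simpa using hd
      subst hd'
      exact h1
  -- (4) N ∘ M = Id
  · intro kK 𝔛 h𝔛 bY
    constructor
    · rintro ⟨e, V, hV, hN, hM⟩
      have hKeV : 𝔄.entS kK.1.1 kK.1.2 ({e} ∪ V) :=
        fun c hc => ent_of_Nfam h h𝔛 (hN c hc)
      exact ⟨kK, memUr _ (Finset.mem_singleton_self _),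
        trans13S h kK.2 hV hKeV hM⟩
    · rintro ⟨cZ, hmem, hent⟩
      have hK : 𝔄.entS kK.1.1 kK.1.2 ({bY.1.1} ∪ bY.1.2) := wit_entS h h𝔛 hmem hent
      obtain ⟨e, V, hV, h1, h2⟩ := h.interp kK.1.1 kK.1.2 _ kK.2 hK
      exact ⟨e, V, hV, fun c hc => Nfam_of_ent (h1 c hc), h2⟩
  -- (5) naturality
  · intro B 𝔅 hB H hH i X hX bY
    constructor
    · rintro ⟨cZ, 𝔙, h𝔙, hM, cZ', hmem, hHd⟩
      have hMcZ' : 𝔄.entS i X ({cZ'.1.1} ∪ cZ'.1.2) := by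
        apply hM cZ'
        rcases memU hmem with hm | hm
        · exact memUr _ hm
        · exact memUl _ hm
      have hHX : ∀ d ∈ ({bY.1.1} : Finset B) ∪ bY.1.2, H i X d :=
        fun d hd => Htrans h hH hX cZ'.2 hMcZ' (hHd d hd)
      obtain ⟨c, U, hU, e, V, hV, h1, h2, h3⟩ :=
        hH.af5 i X (({bY.1.1} : Finset B) ∪ bY.1.2) hX hHX
      exact ⟨e, V, hV, fun c' hc' => Htrans h hH hX hU h1 (h2 c' hc'), h3⟩
    · rintro ⟨e, V, hV, hHX, hM'⟩
      obtain ⟨c, U, hU, e', V', hV', h1, h2, h3⟩ :=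
        hH.af5 i X (({e} : Finset B) ∪ V) hX hHX
      have hHcU : ∀ d ∈ ({bY.1.1} : Finset B) ∪ bY.1.2, H c U d := by
        intro d hd
        exact hH.af1 c U e' V' d hU hV' h2 (trans13 hB hV' hV h3 (hM' d hd))
      refine ⟨⟨(c, U), hU⟩, {⟨(c, U), hU⟩}, mem_TCon.mpr (Or.inl rfl), ?_,
        ⟨(c, U), hU⟩, memUr _ (Finset.mem_singleton_self _), hHcU⟩
      intro d hd
      have hd' : d = ⟨(c, U), hU⟩ := by simpa using hd
      subst hd'
      exact h1
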